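/- arXiv:0711.1761 — 2 statements merged into one kernel-verified Lean document; each statement's English description precedes it below -/
import Mathlib

section
/- In a fibrant weak double category, every vertical isomorphism f : x ≅ y has an orthogonal companion: a horizontal 1-cell f̄ : x ⇸ y together with 2-cells ε_f (with boundary f, f̄, id_y on the appropriate sides and horizontal identity I_y on the bottom) and η_f (with horizontal identity I_x on top and f̄ on the bottom, vertical identity on the left and f on the right) satisfying the two triangle identities ε_f · η_f = I_f and ε_f * η_f = (l⁻¹ ∘ r)_{f̄}. -/
open CategoryTheory

universe t w v u

/-- A *weak double category*: a category of objects and vertical 1-cells, a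
category of horizontal 1-cells and 2-cells (with vertical composition),
horizontal identities and composition of horizontal 1-cells and 2-cells
(functorial), and invertible globular unitors and associator, natural, and
satisfying the pentagon and triangle laws.  The underlying cell data
`(Obj, VHom, HHom, Cell)` is a parameter, so that particular weak double
categories can be specified by their cells. -/
structure DblCatStr (Obj : Type u) (VHom : Obj → Obj → Type v) (HHom : Obj → Obj → Type w)
    (Cell : ∀ {x₀ x₁ y₀ y₁ : Obj},
      VHom x₀ y₀ → HHom x₀ x₁ → HHom y₀ y₁ → VHom x₁ y₁ → Type t) :
    Type (max u v w t) where
  vid : ∀ x, VHom x x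
  vcomp : ∀ {x y z}, VHom x y → VHom y z → VHom x z
  vid_comp : ∀ {x y} (f : VHom x y), vcomp (vid x) f = f
  vcomp_vid : ∀ {x y} (f : VHom x y), vcomp f (vid y) = f
  vassoc : ∀ {x y z w} (f : VHom x y) (g : VHom y z) (h : VHom z w),
    vcomp (vcomp f g) h = vcomp f (vcomp g h)
  cid : ∀ {x y} (h : HHom x y), Cell (vid x) h h (vid y)
  cvcomp : ∀ {x₀ x₁ y₀ y₁ z₀ z₁} {f : VHom x₀ y₀} {g : VHom x₁ y₁}
    {f' : VHom y₀ z₀} {g' : VHom y₁ z₁} {h : HHom x₀ x₁} {k : HHom y₀ y₁} {l : HHom z₀ z₁},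
    Cell f h k g → Cell f' k l g' → Cell (vcomp f f') h l (vcomp g g')
  cid_cvcomp : ∀ {x₀ x₁ y₀ y₁} {f : VHom x₀ y₀} {g : VHom x₁ y₁}
    {h : HHom x₀ x₁} {k : HHom y₀ y₁} (α : Cell f h k g), HEq (cvcomp (cid h) α) α
  cvcomp_cid : ∀ {x₀ x₁ y₀ y₁} {f : VHom x₀ y₀} {g : VHom x₁ y₁}
    {h : HHom x₀ x₁} {k : HHom y₀ y₁} (α : Cell f h k g), HEq (cvcomp α (cid k)) α
  cvcomp_assoc : ∀ {x₀ x₁ y₀ y₁ z₀ z₁ w₀ w₁} {f : VHom x₀ y₀} {g : VHom x₁ y₁}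
    {f' : VHom y₀ z₀} {g' : VHom y₁ z₁} {f'' : VHom z₀ w₀} {g'' : VHom z₁ w₁}
    {h : HHom x₀ x₁} {k : HHom y₀ y₁} {l : HHom z₀ z₁} {m : HHom w₀ w₁}
    (α : Cell f h k g) (β : Cell f' k l g') (γ : Cell f'' l m g''),
    HEq (cvcomp (cvcomp α β) γ) (cvcomp α (cvcomp β γ))
  hid : ∀ x, HHom x x
  hcomp : ∀ {x y z}, HHom x y → HHom y z → HHom x z
  chid : ∀ {x y} (f : VHom x y), Cell f (hid x) (hid y) f
  chcomp : ∀ {x₀ x₁ x₂ y₀ y₁ y₂} {f : VHom x₀ y₀} {g : VHom x₁ y₁} {e : VHom x₂ y₂}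
    {h : HHom x₀ x₁} {h' : HHom x₁ x₂} {k : HHom y₀ y₁} {k' : HHom y₁ y₂},
    Cell f h k g → Cell g h' k' e → Cell f (hcomp h h') (hcomp k k') e
  chid_vid : ∀ x, chid (vid x) = cid (hid x)
  chid_vcomp : ∀ {x y z} (f : VHom x y) (f' : VHom y z),
    chid (vcomp f f') = cvcomp (chid f) (chid f')
  chcomp_cid : ∀ {x y z} (h : HHom x y) (h' : HHom y z),
    chcomp (cid h) (cid h') = cid (hcomp h h')
  interchange : ∀ {x₀ x₁ x₂ y₀ y₁ y₂ z₀ z₁ z₂}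
    {f : VHom x₀ y₀} {g : VHom x₁ y₁} {e : VHom x₂ y₂}
    {f' : VHom y₀ z₀} {g' : VHom y₁ z₁} {e' : VHom y₂ z₂}
    {h : HHom x₀ x₁} {h' : HHom x₁ x₂} {k : HHom y₀ y₁} {k' : HHom y₁ y₂}
    {l : HHom z₀ z₁} {l' : HHom z₁ z₂}
    (α : Cell f h k g) (β : Cell g h' k' e) (α' : Cell f' k l g') (β' : Cell g' k' l' e'),
    chcomp (cvcomp α α') (cvcomp β β') = cvcomp (chcomp α β) (chcomp α' β')
  lunit : ∀ {x y} (h : HHom x y), Cell (vid x) (hcomp (hid x) h) h (vid y)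
  lunitInv : ∀ {x y} (h : HHom x y), Cell (vid x) h (hcomp (hid x) h) (vid y)
  lunit_isoL : ∀ {x y} (h : HHom x y),
    HEq (cvcomp (lunit h) (lunitInv h)) (cid (hcomp (hid x) h))
  lunit_isoR : ∀ {x y} (h : HHom x y), HEq (cvcomp (lunitInv h) (lunit h)) (cid h)
  lunit_nat : ∀ {x₀ x₁ y₀ y₁} {f : VHom x₀ y₀} {g : VHom x₁ y₁}
    {h : HHom x₀ x₁} {k : HHom y₀ y₁} (α : Cell f h k g),
    HEq (cvcomp (lunit h) α) (cvcomp (chcomp (chid f) α) (lunit k))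
  runit : ∀ {x y} (h : HHom x y), Cell (vid x) (hcomp h (hid y)) h (vid y)
  runitInv : ∀ {x y} (h : HHom x y), Cell (vid x) h (hcomp h (hid y)) (vid y)
  runit_isoL : ∀ {x y} (h : HHom x y),
    HEq (cvcomp (runit h) (runitInv h)) (cid (hcomp h (hid y)))
  runit_isoR : ∀ {x y} (h : HHom x y), HEq (cvcomp (runitInv h) (runit h)) (cid h)
  runit_nat : ∀ {x₀ x₁ y₀ y₁} {f : VHom x₀ y₀} {g : VHom x₁ y₁}
    {h : HHom x₀ x₁} {k : HHom y₀ y₁} (α : Cell f h k g),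
    HEq (cvcomp (runit h) α) (cvcomp (chcomp α (chid g)) (runit k))
  assoc : ∀ {x y z w} (h : HHom x y) (k : HHom y z) (l : HHom z w),
    Cell (vid x) (hcomp h (hcomp k l)) (hcomp (hcomp h k) l) (vid w)
  assocInv : ∀ {x y z w} (h : HHom x y) (k : HHom y z) (l : HHom z w),
    Cell (vid x) (hcomp (hcomp h k) l) (hcomp h (hcomp k l)) (vid w)
  assoc_isoL : ∀ {x y z w} (h : HHom x y) (k : HHom y z) (l : HHom z w),
    HEq (cvcomp (assoc h k l) (assocInv h k l)) (cid (hcomp h (hcomp k l)))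
  assoc_isoR : ∀ {x y z w} (h : HHom x y) (k : HHom y z) (l : HHom z w),
    HEq (cvcomp (assocInv h k l) (assoc h k l)) (cid (hcomp (hcomp h k) l))
  assoc_nat : ∀ {x₀ x₁ x₂ x₃ y₀ y₁ y₂ y₃}
    {f : VHom x₀ y₀} {g : VHom x₁ y₁} {e : VHom x₂ y₂} {e' : VHom x₃ y₃}
    {h : HHom x₀ x₁} {k : HHom x₁ x₂} {l : HHom x₂ x₃}
    {h' : HHom y₀ y₁} {k' : HHom y₁ y₂} {l' : HHom y₂ y₃}
    (α : Cell f h h' g) (β : Cell g k k' e) (γ : Cell e l l' e'),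
    HEq (cvcomp (assoc h k l) (chcomp (chcomp α β) γ))
      (cvcomp (chcomp α (chcomp β γ)) (assoc h' k' l'))
  pentagon : ∀ {a b c d e} (h : HHom a b) (k : HHom b c) (l : HHom c d) (m : HHom d e),
    HEq (cvcomp (assoc h k (hcomp l m)) (assoc (hcomp h k) l m))
      (cvcomp (chcomp (cid h) (assoc k l m))
        (cvcomp (assoc h (hcomp k l) m) (chcomp (assoc h k l) (cid m))))
  triangle : ∀ {a b c} (h : HHom a b) (k : HHom b c),
    HEq (cvcomp (assoc h (hid b) k) (chcomp (runit h) (cid k)))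
      (chcomp (cid h) (lunit k))

namespace DblCatStr

variable {Obj : Type u} {VHom : Obj → Obj → Type v} {HHom : Obj → Obj → Type w}
  {Cell : ∀ {x₀ x₁ y₀ y₁ : Obj},
    VHom x₀ y₀ → HHom x₀ x₁ → HHom y₀ y₁ → VHom x₁ y₁ → Type t}
  (D : DblCatStr Obj VHom HHom Cell)

/-- Transport a 2-cell along equalities of its vertical boundaries. -/
def recast {x₀ x₁ y₀ y₁ : Obj} {f f' : VHom x₀ y₀} {g g' : VHom x₁ y₁}
    {h : HHom x₀ x₁} {k : HHom y₀ y₁} (hf : f = f') (hg : g = g')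
    (α : Cell f h k g) : Cell f' h k g' := by
  cases hf; cases hg; exact α

/-- Globular 2-cells: those whose vertical boundaries are identities. -/
def Glob {x y : Obj} (h k : HHom x y) : Type t := Cell (D.vid x) h k (D.vid y)

/-- Vertical composition of globular 2-cells. -/
def gcomp {x y : Obj} {h k l : HHom x y} (α : D.Glob h k) (β : D.Glob k l) :
    D.Glob h l := by
  have tmp := D.cvcomp α β
  simp only [D.vid_comp] at tmp
  exact tmp

/-- A globular 2-cell is invertible (in the category `C₁`). -/
def GlobInv {x y : Obj} {h k : HHom x y} (α : D.Glob h k) : Prop :=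
  ∃ β : D.Glob k h, D.gcomp α β = D.cid h ∧ D.gcomp β α = D.cid k

/-- A vertical isomorphism. -/
structure VIso (x y : Obj) where
  hom : VHom x y
  inv : VHom y x
  hom_inv : D.vcomp hom inv = D.vid x
  inv_hom : D.vcomp inv hom = D.vid y

/-- The inverse vertical isomorphism. -/
def VIso.symm {x y : Obj} (f : D.VIso x y) : D.VIso y x :=
  ⟨f.inv, f.hom, f.inv_hom, f.hom_inv⟩

/-- The identity vertical isomorphism. -/
def idVIso (x : Obj) : D.VIso x x :=
  ⟨D.vid x, D.vid x, D.vid_comp _, D.vid_comp _⟩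

/-- Invertibility of a 2-cell bounded by vertical isomorphisms
(invertibility in the category `C₁` of horizontal 1-cells and 2-cells). -/
def CellInv {x₀ x₁ y₀ y₁ : Obj} (f : D.VIso x₀ y₀) (g : D.VIso x₁ y₁)
    {h : HHom x₀ x₁} {k : HHom y₀ y₁} (α : Cell f.hom h k g.hom) : Prop :=
  ∃ β : Cell f.inv k h g.inv,
    HEq (D.cvcomp α β) (D.cid h) ∧ HEq (D.cvcomp β α) (D.cid k)

/-- A weak double category is *fibrant* if the functor
`(s, t) : C₁ → C₀ × C₀` is an isofibration: every boundary consisting of a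
horizontal 1-cell `k` and vertical isomorphisms `f`, `g` can be filled by a
horizontal 1-cell `h` and an invertible 2-cell. -/
def Fibrant : Prop :=
  ∀ {x₀ x₁ y₀ y₁ : Obj} (f : D.VIso x₀ y₀) (g : D.VIso x₁ y₁) (k : HHom y₀ y₁),
    ∃ (h : HHom x₀ x₁) (θ : Cell f.hom h k g.hom), D.CellInv f g θ

/-- An *orthogonal companion* of a vertical 1-cell `f : x → y`: a horizontal
1-cell `f̄ : x ⇸ y` with 2-cells `η_f` and `ε_f` satisfying the two triangle
identities `ε_f · η_f = I_f` and `ε_f * η_f = (l⁻¹ r)_{f̄}`. -/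
structure CompanionOf {x y : Obj} (f : VHom x y) where
  bar : HHom x y
  η : Cell (D.vid x) (D.hid x) bar f
  ε : Cell f bar (D.hid y) (D.vid y)
  triangle₁ : HEq (D.cvcomp η ε) (D.chid f)
  triangle₂ : D.chcomp η ε = D.gcomp (D.lunit bar) (D.runitInv bar)

/-- The "barred" globular 2-cell obtained from a 2-cell `α` bounded by
vertical isomorphisms `f`, `g` by pasting with `η_f` and `ε_g` and the unit
constraints. -/
def barCell (c : ∀ {x y : Obj} (f : D.VIso x y), D.CompanionOf f.hom)
    {x₀ x₁ y₀ y₁ : Obj} (f : D.VIso x₀ y₀) (g : D.VIso x₁ y₁)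
    {h : HHom x₀ x₁} {k : HHom y₀ y₁} (α : Cell f.hom h k g.hom) :
    D.Glob (D.hcomp h (c g).bar) (D.hcomp (c f).bar k) :=
  recast (by simp only [D.vid_comp]) (by simp only [D.vid_comp])
    (D.cvcomp (D.chcomp (D.lunitInv h) (D.cid (c g).bar))
      (D.cvcomp (D.chcomp (D.chcomp (c f).η α) (c g).ε)
        (D.runit (D.hcomp (c f).bar k))))

end DblCatStr

namespace DblCatStr

section Infra

variable {Obj : Type u} {VHom : Obj → Obj → Type v} {HHom : Obj → Obj → Type w}
  {Cell : ∀ {x₀ x₁ y₀ y₁ : Obj},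
    VHom x₀ y₀ → HHom x₀ x₁ → HHom y₀ y₁ → VHom x₁ y₁ → Type t}
  (D : DblCatStr Obj VHom HHom Cell)

theorem recast_heq {x₀ x₁ y₀ y₁ : Obj} {f f' : VHom x₀ y₀} {g g' : VHom x₁ y₁}
    {h : HHom x₀ x₁} {k : HHom y₀ y₁} (hf : f = f') (hg : g = g')
    (α : Cell f h k g) :
    HEq (recast hf hg α : Cell f' h k g') α := by
  cases hf; cases hg; rfl

theorem gcomp_heq {x y : Obj} {h k l : HHom x y} (α : D.Glob h k) (β : D.Glob k l) :
    HEq (D.gcomp α β) (D.cvcomp α β) := by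
  unfold gcomp
  exact cast_heq _ _

theorem cvcomp_congr {x₀ x₁ y₀ y₁ z₀ z₁ : Obj}
    {f₁ f₂ : VHom x₀ y₀} {g₁ g₂ : VHom x₁ y₁} {p₁ p₂ : VHom y₀ z₀} {q₁ q₂ : VHom y₁ z₁}
    {h : HHom x₀ x₁} {k : HHom y₀ y₁} {l : HHom z₀ z₁}
    {α₁ : Cell f₁ h k g₁} {α₂ : Cell f₂ h k g₂}
    {β₁ : Cell p₁ k l q₁} {β₂ : Cell p₂ k l q₂}
    (ef : f₁ = f₂) (eg : g₁ = g₂) (ep : p₁ = p₂) (eq' : q₁ = q₂)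
    (hα : HEq α₁ α₂) (hβ : HEq β₁ β₂) :
    HEq (D.cvcomp α₁ β₁) (D.cvcomp α₂ β₂) := by
  subst ef; subst eg; subst ep; subst eq'
  cases hα; cases hβ; rfl

theorem chcomp_congr {x₀ x₁ x₂ y₀ y₁ y₂ : Obj}
    {f₁ f₂ : VHom x₀ y₀} {g₁ g₂ : VHom x₁ y₁} {e₁ e₂ : VHom x₂ y₂}
    {h : HHom x₀ x₁} {h' : HHom x₁ x₂} {k : HHom y₀ y₁} {k' : HHom y₁ y₂}
    {α₁ : Cell f₁ h k g₁} {α₂ : Cell f₂ h k g₂}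
    {β₁ : Cell g₁ h' k' e₁} {β₂ : Cell g₂ h' k' e₂}
    (ef : f₁ = f₂) (eg : g₁ = g₂) (ee : e₁ = e₂)
    (hα : HEq α₁ α₂) (hβ : HEq β₁ β₂) :
    HEq (D.chcomp α₁ β₁) (D.chcomp α₂ β₂) := by
  subst ef; subst eg; subst ee
  cases hα; cases hβ; rfl

end Infra

end DblCatStr

namespace DblCatStr

section Infra2

variable {Obj : Type u} {VHom : Obj → Obj → Type v} {HHom : Obj → Obj → Type w}
  {Cell : ∀ {x₀ x₁ y₀ y₁ : Obj},
    VHom x₀ y₀ → HHom x₀ x₁ → HHom y₀ y₁ → VHom x₁ y₁ → Type t}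
  (D : DblCatStr Obj VHom HHom Cell)

theorem cid_gcomp {x y : Obj} {h k : HHom x y} (α : D.Glob h k) :
    D.gcomp (D.cid h) α = α :=
  eq_of_heq ((D.gcomp_heq _ _).trans (D.cid_cvcomp α))

theorem gcomp_cid {x y : Obj} {h k : HHom x y} (α : D.Glob h k) :
    D.gcomp α (D.cid k) = α :=
  eq_of_heq ((D.gcomp_heq _ _).trans (D.cvcomp_cid α))

theorem gcomp_assoc' {x y : Obj} {h k l m : HHom x y}
    (α : D.Glob h k) (β : D.Glob k l) (γ : D.Glob l m) :
    D.gcomp (D.gcomp α β) γ = D.gcomp α (D.gcomp β γ) :=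
  eq_of_heq <|
    ((((D.gcomp_heq _ _).trans
      (D.cvcomp_congr (D.vid_comp _).symm (D.vid_comp _).symm rfl rfl
        (D.gcomp_heq _ _) HEq.rfl)).trans
      (D.cvcomp_assoc α β γ)).trans
      (D.cvcomp_congr rfl rfl (D.vid_comp _) (D.vid_comp _)
        HEq.rfl (D.gcomp_heq _ _).symm)).trans
      (D.gcomp_heq _ _).symm

theorem chcomp_gcomp {x y z : Obj} {h₁ k₁ l₁ : HHom x y} {h₂ k₂ l₂ : HHom y z}
    (α : D.Glob h₁ k₁) (β : D.Glob h₂ k₂) (α' : D.Glob k₁ l₁) (β' : D.Glob k₂ l₂) :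
    D.chcomp (D.gcomp α α') (D.gcomp β β') = D.gcomp (D.chcomp α β) (D.chcomp α' β') :=
  eq_of_heq <|
    ((D.chcomp_congr (D.vid_comp _).symm (D.vid_comp _).symm (D.vid_comp _).symm
        (D.gcomp_heq _ _) (D.gcomp_heq _ _)).trans
      (heq_of_eq (D.interchange α β α' β'))).trans
      (D.gcomp_heq _ _).symm

theorem lunit_gnat {x y : Obj} {h k : HHom x y} (α : D.Glob h k) :
    D.gcomp (D.lunit h) α = D.gcomp (D.chcomp (D.cid (D.hid x)) α) (D.lunit k) :=
  eq_of_heq <|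
    (((D.gcomp_heq _ _).trans (D.lunit_nat α)).trans
      (D.cvcomp_congr rfl rfl rfl rfl
        (D.chcomp_congr rfl rfl rfl (heq_of_eq (D.chid_vid x)) HEq.rfl) HEq.rfl)).trans
      (D.gcomp_heq _ _).symm

theorem runit_gnat {x y : Obj} {h k : HHom x y} (α : D.Glob h k) :
    D.gcomp (D.runit h) α = D.gcomp (D.chcomp α (D.cid (D.hid y))) (D.runit k) :=
  eq_of_heq <|
    (((D.gcomp_heq _ _).trans (D.runit_nat α)).trans
      (D.cvcomp_congr rfl rfl rfl rfl
        (D.chcomp_congr rfl rfl rfl HEq.rfl (heq_of_eq (D.chid_vid y))) HEq.rfl)).trans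
      (D.gcomp_heq _ _).symm

theorem assoc_gnat {a b c d : Obj} {h h' : HHom a b} {k k' : HHom b c} {l l' : HHom c d}
    (α : D.Glob h h') (β : D.Glob k k') (γ : D.Glob l l') :
    D.gcomp (D.assoc h k l) (D.chcomp (D.chcomp α β) γ)
      = D.gcomp (D.chcomp α (D.chcomp β γ)) (D.assoc h' k' l') :=
  eq_of_heq <|
    ((D.gcomp_heq _ _).trans (D.assoc_nat α β γ)).trans (D.gcomp_heq _ _).symm

theorem assoc_assocInv {a b c d : Obj} (h : HHom a b) (k : HHom b c) (l : HHom c d) :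
    D.gcomp (D.assoc h k l) (D.assocInv h k l) = D.cid _ :=
  eq_of_heq ((D.gcomp_heq _ _).trans (D.assoc_isoL h k l))

theorem assocInv_assoc {a b c d : Obj} (h : HHom a b) (k : HHom b c) (l : HHom c d) :
    D.gcomp (D.assocInv h k l) (D.assoc h k l) = D.cid _ :=
  eq_of_heq ((D.gcomp_heq _ _).trans (D.assoc_isoR h k l))

theorem lunit_lunitInv {x y : Obj} (h : HHom x y) :
    D.gcomp (D.lunit h) (D.lunitInv h) = D.cid _ :=
  eq_of_heq ((D.gcomp_heq _ _).trans (D.lunit_isoL h))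

theorem lunitInv_lunit {x y : Obj} (h : HHom x y) :
    D.gcomp (D.lunitInv h) (D.lunit h) = D.cid _ :=
  eq_of_heq ((D.gcomp_heq _ _).trans (D.lunit_isoR h))

theorem runit_runitInv {x y : Obj} (h : HHom x y) :
    D.gcomp (D.runit h) (D.runitInv h) = D.cid _ :=
  eq_of_heq ((D.gcomp_heq _ _).trans (D.runit_isoL h))

theorem runitInv_runit {x y : Obj} (h : HHom x y) :
    D.gcomp (D.runitInv h) (D.runit h) = D.cid _ :=
  eq_of_heq ((D.gcomp_heq _ _).trans (D.runit_isoR h))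

theorem gpentagon {a b c d e : Obj} (h : HHom a b) (k : HHom b c) (l : HHom c d) (m : HHom d e) :
    D.gcomp (D.assoc h k (D.hcomp l m)) (D.assoc (D.hcomp h k) l m)
      = D.gcomp (D.chcomp (D.cid h) (D.assoc k l m))
          (D.gcomp (D.assoc h (D.hcomp k l) m) (D.chcomp (D.assoc h k l) (D.cid m))) :=
  eq_of_heq <|
    (((D.gcomp_heq _ _).trans (D.pentagon h k l m)).trans
      (D.cvcomp_congr rfl rfl (D.vid_comp _) (D.vid_comp _)
        HEq.rfl (D.gcomp_heq _ _).symm)).trans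
      (D.gcomp_heq _ _).symm

theorem gtriangle {a b c : Obj} (h : HHom a b) (k : HHom b c) :
    D.gcomp (D.assoc h (D.hid b) k) (D.chcomp (D.runit h) (D.cid k))
      = D.chcomp (D.cid h) (D.lunit k) :=
  eq_of_heq ((D.gcomp_heq _ _).trans (D.triangle h k))

end Infra2

end DblCatStr

namespace DblCatStr

section EndCat

open CategoryTheory MonoidalCategory

variable {Obj : Type u} {VHom : Obj → Obj → Type v} {HHom : Obj → Obj → Type w}
  {Cell : ∀ {x₀ x₁ y₀ y₁ : Obj},
    VHom x₀ y₀ → HHom x₀ x₁ → HHom y₀ y₁ → VHom x₁ y₁ → Type t}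

/-- The endo-category of horizontal endo-1-cells at an object `y`, with
globular 2-cells as morphisms. -/
def EC (D : DblCatStr Obj VHom HHom Cell) (y : Obj) : Type w := HHom y y

variable {D : DblCatStr Obj VHom HHom Cell} {y : Obj}

instance : Category (EC (D := D) (y := y)) where
  Hom h k := D.Glob h k
  id h := D.cid h
  comp α β := D.gcomp α β
  id_comp α := D.cid_gcomp α
  comp_id α := D.gcomp_cid α
  assoc α β γ := D.gcomp_assoc' α β γ

instance : MonoidalCategoryStruct (EC (D := D) (y := y)) where
  tensorObj h k := D.hcomp h k
  whiskerLeft h _ _ α := D.chcomp (D.cid h) α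
  whiskerRight α k := D.chcomp α (D.cid k)
  tensorHom α β := D.chcomp α β
  tensorUnit := D.hid y
  associator h k l := ⟨D.assocInv h k l, D.assoc h k l,
    D.assocInv_assoc h k l, D.assoc_assocInv h k l⟩
  leftUnitor h := ⟨D.lunit h, D.lunitInv h, D.lunit_lunitInv h, D.lunitInv_lunit h⟩
  rightUnitor h := ⟨D.runit h, D.runitInv h, D.runit_runitInv h, D.runitInv_runit h⟩

theorem EC.wl_comp (X : EC D y) {A B C : EC D y} (α : A ⟶ B) (β : B ⟶ C) :
    (X ◁ α) ≫ (X ◁ β) = X ◁ (α ≫ β) := by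
  show D.gcomp (D.chcomp (D.cid X) α) (D.chcomp (D.cid X) β)
      = D.chcomp (D.cid X) (D.gcomp α β)
  exact (D.chcomp_gcomp (D.cid X) α (D.cid X) β).symm.trans
    (congrArg (fun z => D.chcomp z (D.gcomp α β)) (D.cid_gcomp (D.cid X)))

theorem EC.wr_comp (X : EC D y) {A B C : EC D y} (α : A ⟶ B) (β : B ⟶ C) :
    (α ▷ X) ≫ (β ▷ X) = (α ≫ β) ▷ X := by
  show D.gcomp (D.chcomp α (D.cid X)) (D.chcomp β (D.cid X))
      = D.chcomp (D.gcomp α β) (D.cid X)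
  exact (D.chcomp_gcomp α (D.cid X) β (D.cid X)).symm.trans
    (congrArg (fun z => D.chcomp (D.gcomp α β) z) (D.cid_gcomp (D.cid X)))

theorem EC.wl_id (X B : EC D y) : X ◁ (𝟙 B) = 𝟙 (X ⊗ B) :=
  D.chcomp_cid X B

theorem EC.wr_id (X B : EC D y) : (𝟙 B) ▷ X = 𝟙 (B ⊗ X) :=
  D.chcomp_cid B X

theorem EC.assocNat {X₁ X₂ X₃ Y₁ Y₂ Y₃ : EC D y}
    (f₁ : X₁ ⟶ Y₁) (f₂ : X₂ ⟶ Y₂) (f₃ : X₃ ⟶ Y₃) :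
    ((f₁ ⊗ₘ f₂) ⊗ₘ f₃) ≫ (α_ Y₁ Y₂ Y₃).hom = (α_ X₁ X₂ X₃).hom ≫ (f₁ ⊗ₘ (f₂ ⊗ₘ f₃)) := by
  have H : (α_ X₁ X₂ X₃).inv ≫ ((f₁ ⊗ₘ f₂) ⊗ₘ f₃)
      = (f₁ ⊗ₘ (f₂ ⊗ₘ f₃)) ≫ (α_ Y₁ Y₂ Y₃).inv := D.assoc_gnat f₁ f₂ f₃
  rw [← Iso.inv_comp_eq, ← Category.assoc, H, Category.assoc, Iso.inv_hom_id,
    Category.comp_id]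

theorem EC.lunitNat {X Y : EC D y} (f : X ⟶ Y) :
    ((𝟙 (𝟙_ (EC D y))) ⊗ₘ f) ≫ (λ_ Y).hom = (λ_ X).hom ≫ f :=
  (D.lunit_gnat f).symm

theorem EC.runitNat {X Y : EC D y} (f : X ⟶ Y) :
    (f ⊗ₘ (𝟙 (𝟙_ (EC D y)))) ≫ (ρ_ Y).hom = (ρ_ X).hom ≫ f :=
  (D.runit_gnat f).symm

theorem EC.pentagon (W X Y Z : EC D y) :
    ((α_ W X Y).hom ▷ Z) ≫ (α_ W (X ⊗ Y) Z).hom ≫ (W ◁ (α_ X Y Z).hom) =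
      (α_ (W ⊗ X) Y Z).hom ≫ (α_ W X (Y ⊗ Z)).hom := by
  have P : (α_ W X (Y ⊗ Z)).inv ≫ (α_ (W ⊗ X) Y Z).inv
      = (W ◁ (α_ X Y Z).inv) ≫ ((α_ W (X ⊗ Y) Z).inv ≫ ((α_ W X Y).inv ▷ Z)) :=
    D.gpentagon W X Y Z
  have K : ((α_ W X (Y ⊗ Z)).inv ≫ (α_ (W ⊗ X) Y Z).inv) ≫
      (((α_ W X Y).hom ▷ Z) ≫ (α_ W (X ⊗ Y) Z).hom ≫ (W ◁ (α_ X Y Z).hom)) = 𝟙 _ := by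
    rw [P]
    simp only [Category.assoc]
    slice_lhs 3 4 => rw [EC.wr_comp, Iso.inv_hom_id, EC.wr_id]
    slice_lhs 3 4 => rw [Category.id_comp]
    slice_lhs 2 3 => rw [Iso.inv_hom_id]
    slice_lhs 2 3 => rw [Category.id_comp]
    rw [EC.wl_comp, Iso.inv_hom_id, EC.wl_id]
  have := congrArg (fun m => ((α_ (W ⊗ X) Y Z).hom ≫ (α_ W X (Y ⊗ Z)).hom) ≫ m) K
  simpa using this

theorem EC.triangle (X Y : EC D y) :
    (α_ X (𝟙_ (EC D y)) Y).hom ≫ (X ◁ (λ_ Y).hom) = ((ρ_ X).hom ▷ Y) := by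
  have T : (α_ X (𝟙_ (EC D y)) Y).inv ≫ ((ρ_ X).hom ▷ Y) = (X ◁ (λ_ Y).hom) :=
    D.gtriangle X Y
  rw [← T, ← Category.assoc, Iso.hom_inv_id, Category.id_comp]

instance : MonoidalCategory (EC (D := D) (y := y)) :=
  MonoidalCategory.ofTensorHom
    (id_tensorHom_id := fun X Y => D.chcomp_cid X Y)
    (id_tensorHom := fun _ _ _ _ => rfl)
    (tensorHom_id := fun _ _ => rfl)
    (tensorHom_comp_tensorHom := fun f₁ f₂ g₁ g₂ => (D.chcomp_gcomp f₁ f₂ g₁ g₂).symm)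
    (associator_naturality := fun f₁ f₂ f₃ => EC.assocNat f₁ f₂ f₃)
    (leftUnitor_naturality := fun f => EC.lunitNat f)
    (rightUnitor_naturality := fun f => EC.runitNat f)
    (pentagon := fun W X Y Z => EC.pentagon W X Y Z)
    (triangle := fun X Y => EC.triangle X Y)

theorem unitors_eq (D : DblCatStr Obj VHom HHom Cell) (y : Obj) :
    D.lunit (D.hid y) = D.runit (D.hid y) :=
  MonoidalCategory.unitors_equal (C := EC D y)

end EndCat

end DblCatStr

open DblCatStr

variable {Obj : Type u} {VHom : Obj → Obj → Type v} {HHom : Obj → Obj → Type w}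
  {Cell : ∀ {x₀ x₁ y₀ y₁ : Obj},
    VHom x₀ y₀ → HHom x₀ x₁ → HHom y₀ y₁ → VHom x₁ y₁ → Type t}

/-- in a fibrant weak double category, every vertical isomorphism
has an orthogonal companion (with the two triangle identities). -/
theorem companion_of_fibrant (D : DblCatStr Obj VHom HHom Cell) (hD : D.Fibrant)
    {x y : Obj} (f : D.VIso x y) : Nonempty (D.CompanionOf f.hom) := by
  obtain ⟨bar, θ, β, hθβ, hβθ⟩ := hD f (D.idVIso y) (D.hid y)
  have e1 : D.vcomp f.hom f.inv = D.vid x := f.hom_inv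
  have e2 : D.vcomp f.hom (D.vid y) = f.hom := D.vcomp_vid f.hom
  refine ⟨⟨bar, recast e1 e2 (D.cvcomp (D.chid f.hom) β), θ, ?_, ?_⟩⟩
  · -- triangle₁
    have h1 : HEq (D.cvcomp (recast e1 e2 (D.cvcomp (D.chid f.hom) β)) θ)
        (D.cvcomp (D.cvcomp (D.chid f.hom) β) θ) :=
      D.cvcomp_congr e1.symm e2.symm rfl rfl (recast_heq e1 e2 _) HEq.rfl
    have h2 := D.cvcomp_assoc (D.chid f.hom) β θ
    have h3 : HEq (D.cvcomp (D.chid f.hom) (D.cvcomp β θ))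
        (D.cvcomp (D.chid f.hom) (D.cid (D.hid y))) :=
      D.cvcomp_congr rfl rfl f.inv_hom (D.vid_comp _) HEq.rfl hβθ
    exact ((h1.trans h2).trans h3).trans (D.cvcomp_cid (D.chid f.hom))
  · -- triangle₂
    apply eq_of_heq
    have g1 : HEq (D.chcomp (recast e1 e2 (D.cvcomp (D.chid f.hom) β)) θ)
        (D.chcomp (D.cvcomp (D.chid f.hom) β) (D.cvcomp θ (D.cid (D.hid y)))) :=
      D.chcomp_congr e1.symm e2.symm (D.vid_comp _).symm
        (recast_heq e1 e2 _) (D.cvcomp_cid θ).symm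
    have g2 : D.chcomp (D.cvcomp (D.chid f.hom) β) (D.cvcomp θ (D.cid (D.hid y)))
        = D.cvcomp (D.chcomp (D.chid f.hom) θ) (D.chcomp β (D.cid (D.hid y))) :=
      D.interchange (D.chid f.hom) θ β (D.cid (D.hid y))
    -- left factor
    have pa1 : HEq (D.chcomp (D.chid f.hom) θ)
        (D.cvcomp (D.chcomp (D.chid f.hom) θ) (D.cid (D.hcomp (D.hid y) (D.hid y)))) :=
      (D.cvcomp_cid _).symm
    have pa2 : HEq (D.cvcomp (D.chcomp (D.chid f.hom) θ) (D.cid (D.hcomp (D.hid y) (D.hid y))))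
        (D.cvcomp (D.chcomp (D.chid f.hom) θ)
          (D.cvcomp (D.lunit (D.hid y)) (D.lunitInv (D.hid y)))) :=
      D.cvcomp_congr rfl rfl (D.vid_comp _).symm (D.vid_comp _).symm
        HEq.rfl (D.lunit_isoL (D.hid y)).symm
    have pa3 := (D.cvcomp_assoc (D.chcomp (D.chid f.hom) θ) (D.lunit (D.hid y))
      (D.lunitInv (D.hid y))).symm
    have pa4 : HEq
        (D.cvcomp (D.cvcomp (D.chcomp (D.chid f.hom) θ) (D.lunit (D.hid y)))
          (D.lunitInv (D.hid y)))
        (D.cvcomp (D.cvcomp (D.lunit bar) θ) (D.lunitInv (D.hid y))) :=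
      D.cvcomp_congr (by simp [D.vid_comp, D.vcomp_vid, DblCatStr.idVIso]) rfl rfl rfl
        (D.lunit_nat θ).symm HEq.rfl
    have PA := ((pa1.trans pa2).trans pa3).trans pa4
    -- right factor
    have pb0 : HEq (D.chcomp β (D.cid (D.hid y))) (D.chcomp β (D.chid (D.vid y))) :=
      D.chcomp_congr rfl rfl rfl HEq.rfl (heq_of_eq (D.chid_vid y).symm)
    have pb1 : HEq (D.chcomp β (D.chid (D.vid y)))
        (D.cvcomp (D.chcomp β (D.chid (D.vid y))) (D.cid (D.hcomp bar (D.hid y)))) :=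
      (D.cvcomp_cid _).symm
    have pb2 : HEq
        (D.cvcomp (D.chcomp β (D.chid (D.vid y))) (D.cid (D.hcomp bar (D.hid y))))
        (D.cvcomp (D.chcomp β (D.chid (D.vid y)))
          (D.cvcomp (D.runit bar) (D.runitInv bar))) :=
      D.cvcomp_congr rfl rfl (D.vid_comp _).symm (D.vid_comp _).symm
        HEq.rfl (D.runit_isoL bar).symm
    have pb3 := (D.cvcomp_assoc (D.chcomp β (D.chid (D.vid y))) (D.runit bar)
      (D.runitInv bar)).symm
    have pb4 : HEq
        (D.cvcomp (D.cvcomp (D.chcomp β (D.chid (D.vid y))) (D.runit bar)) (D.runitInv bar))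
        (D.cvcomp (D.cvcomp (D.runit (D.hid y)) β) (D.runitInv bar)) :=
      D.cvcomp_congr (by simp [D.vid_comp, D.vcomp_vid, DblCatStr.idVIso]) rfl rfl rfl
        (D.runit_nat β).symm HEq.rfl
    have pb5 : HEq
        (D.cvcomp (D.cvcomp (D.runit (D.hid y)) β) (D.runitInv bar))
        (D.cvcomp (D.cvcomp (D.lunit (D.hid y)) β) (D.runitInv bar)) :=
      D.cvcomp_congr rfl rfl rfl rfl
        (D.cvcomp_congr rfl rfl rfl rfl (heq_of_eq (D.unitors_eq y).symm) HEq.rfl) HEq.rfl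
    have PB := (((pb0.trans pb1).trans pb2).trans pb3).trans (pb4.trans pb5)
    -- combine the two factors
    have G1 : HEq
        (D.cvcomp (D.chcomp (D.chid f.hom) θ) (D.chcomp β (D.cid (D.hid y))))
        (D.cvcomp (D.cvcomp (D.cvcomp (D.lunit bar) θ) (D.lunitInv (D.hid y)))
          (D.cvcomp (D.cvcomp (D.lunit (D.hid y)) β) (D.runitInv bar))) :=
      D.cvcomp_congr (by simp [D.vid_comp, D.vcomp_vid, DblCatStr.idVIso]) (by simp [D.vid_comp, D.vcomp_vid, DblCatStr.idVIso])
        (by simp [D.vid_comp, D.vcomp_vid, DblCatStr.idVIso]) (by simp [D.vid_comp, D.vcomp_vid, DblCatStr.idVIso]) PA PB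
    -- reassociate and cancel
    have s1 := D.cvcomp_assoc (D.cvcomp (D.lunit bar) θ) (D.lunitInv (D.hid y))
      (D.cvcomp (D.cvcomp (D.lunit (D.hid y)) β) (D.runitInv bar))
    have s2 : HEq
        (D.cvcomp (D.lunitInv (D.hid y))
          (D.cvcomp (D.cvcomp (D.lunit (D.hid y)) β) (D.runitInv bar)))
        (D.cvcomp (D.lunitInv (D.hid y))
          (D.cvcomp (D.lunit (D.hid y)) (D.cvcomp β (D.runitInv bar)))) :=
      D.cvcomp_congr rfl rfl (D.vassoc _ _ _) (D.vassoc _ _ _)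
        HEq.rfl (D.cvcomp_assoc (D.lunit (D.hid y)) β (D.runitInv bar))
    have s3 := (D.cvcomp_assoc (D.lunitInv (D.hid y)) (D.lunit (D.hid y))
      (D.cvcomp β (D.runitInv bar))).symm
    have s4 : HEq
        (D.cvcomp (D.cvcomp (D.lunitInv (D.hid y)) (D.lunit (D.hid y)))
          (D.cvcomp β (D.runitInv bar)))
        (D.cvcomp (D.cid (D.hid y)) (D.cvcomp β (D.runitInv bar))) :=
      D.cvcomp_congr (D.vid_comp _) (D.vid_comp _) rfl rfl
        (D.lunit_isoR (D.hid y)) HEq.rfl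
    have s5 := D.cid_cvcomp (D.cvcomp β (D.runitInv bar))
    have I2 := (((s2.trans s3).trans s4).trans s5)
    have s6 : HEq
        (D.cvcomp (D.cvcomp (D.lunit bar) θ)
          (D.cvcomp (D.lunitInv (D.hid y))
            (D.cvcomp (D.cvcomp (D.lunit (D.hid y)) β) (D.runitInv bar))))
        (D.cvcomp (D.cvcomp (D.lunit bar) θ) (D.cvcomp β (D.runitInv bar))) :=
      D.cvcomp_congr rfl rfl (by simp [D.vid_comp, D.vcomp_vid, DblCatStr.idVIso])
        (by simp [D.vid_comp, D.vcomp_vid, DblCatStr.idVIso]) HEq.rfl I2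
    have s7 := D.cvcomp_assoc (D.lunit bar) θ (D.cvcomp β (D.runitInv bar))
    have s8 : HEq
        (D.cvcomp (D.lunit bar) (D.cvcomp θ (D.cvcomp β (D.runitInv bar))))
        (D.cvcomp (D.lunit bar) (D.cvcomp (D.cvcomp θ β) (D.runitInv bar))) :=
      D.cvcomp_congr rfl rfl (D.vassoc _ _ _).symm (D.vassoc _ _ _).symm
        HEq.rfl (D.cvcomp_assoc θ β (D.runitInv bar)).symm
    have s9 : HEq
        (D.cvcomp (D.lunit bar) (D.cvcomp (D.cvcomp θ β) (D.runitInv bar)))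
        (D.cvcomp (D.lunit bar) (D.cvcomp (D.cid bar) (D.runitInv bar))) :=
      D.cvcomp_congr rfl rfl (by simp [D.vid_comp, f.hom_inv, DblCatStr.idVIso])
        (by simp [D.vid_comp, DblCatStr.idVIso]) HEq.rfl
        (D.cvcomp_congr f.hom_inv (D.vid_comp _) rfl rfl hθβ HEq.rfl)
    have s10 : HEq
        (D.cvcomp (D.lunit bar) (D.cvcomp (D.cid bar) (D.runitInv bar)))
        (D.cvcomp (D.lunit bar) (D.runitInv bar)) :=
      D.cvcomp_congr rfl rfl (D.vid_comp _) (D.vid_comp _)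
        HEq.rfl (D.cid_cvcomp (D.runitInv bar))
    have s11 := (D.gcomp_heq (D.lunit bar) (D.runitInv bar)).symm
    exact ((((((((g1.trans (heq_of_eq g2)).trans G1).trans s1).trans s6).trans
      s7).trans s8).trans s9).trans s10).trans s11
end

section
/- Conversely, a weak double category in which every vertical isomorphism has an orthogonal companion is fibrant: given a horizontal 1-cell k : y ⇸ y' and vertical isomorphisms f : x → y, g : x' → y', the horizontal 1-cell h := ḡ⁻¹ ∘ (k ∘ f̄) together with the 2-cell built from ε_{g⁻¹}, ε_f and the unit constraints is an invertible filler of the boundary. -/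
open CategoryTheory

universe t w v u

open DblCatStr

variable {Obj : Type u} {VHom : Obj → Obj → Type v} {HHom : Obj → Obj → Type w}
  {Cell : ∀ {x₀ x₁ y₀ y₁ : Obj},
    VHom x₀ y₀ → HHom x₀ x₁ → HHom y₀ y₁ → VHom x₁ y₁ → Type t}


namespace FibrantProof

open DblCatStr

variable {D : DblCatStr Obj VHom HHom Cell}

@[simp] theorem recast_self {x₀ x₁ y₀ y₁ : Obj} {f : VHom x₀ y₀} {g : VHom x₁ y₁}
    {h : HHom x₀ x₁} {k : HHom y₀ y₁} (hf : f = f) (hg : g = g)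
    (α : Cell f h k g) :
    recast hf hg α = α := rfl

theorem recast_heq {x₀ x₁ y₀ y₁ : Obj} {f f' : VHom x₀ y₀} {g g' : VHom x₁ y₁}
    {h : HHom x₀ x₁} {k : HHom y₀ y₁} (hf : f = f') (hg : g = g')
    (α : Cell f h k g) : HEq (recast hf hg α) α := by
  cases hf; cases hg; rfl

theorem gcomp_heq {x y : Obj} {h k l : HHom x y} (α : D.Glob h k) (β : D.Glob k l) :
    HEq (D.gcomp α β) (D.cvcomp α β) := by
  unfold DblCatStr.gcomp
  exact cast_heq _ _

/-- Objects of the category `C₁`: horizontal 1-cells. -/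
structure MOb (D : DblCatStr Obj VHom HHom Cell) : Type (max u w) where
  {x : Obj} {y : Obj}
  h : HHom x y

/-- Morphisms of the category `C₁`: 2-cells together with their vertical
boundaries. -/
structure MHom {D : DblCatStr Obj VHom HHom Cell} (A B : MOb D) :
    Type (max v t) where
  f : VHom A.x B.x
  g : VHom A.y B.y
  α : Cell f A.h B.h g

/-- `O D h` is the horizontal 1-cell `h` viewed as an object of `C₁`. -/
abbrev O (D : DblCatStr Obj VHom HHom Cell) {x y : Obj} (h : HHom x y) : MOb D := ⟨h⟩

theorem MHom.ext1 {A B : MOb D} {p q : MHom A B} (hf : p.f = q.f)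
    (hg : p.g = q.g) (hα : HEq p.α q.α) : p = q := by
  cases p; cases q
  dsimp at hf hg hα
  subst hf; subst hg
  rw [eq_of_heq hα]

instance : Category (MOb D) where
  Hom := MHom
  id A := ⟨D.vid A.x, D.vid A.y, D.cid A.h⟩
  comp p q := ⟨D.vcomp p.f q.f, D.vcomp p.g q.g, D.cvcomp p.α q.α⟩
  id_comp _ := MHom.ext1 (D.vid_comp _) (D.vid_comp _) (D.cid_cvcomp _)
  comp_id _ := MHom.ext1 (D.vcomp_vid _) (D.vcomp_vid _) (D.cvcomp_cid _)
  assoc _ _ _ := MHom.ext1 (D.vassoc _ _ _) (D.vassoc _ _ _)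
    (D.cvcomp_assoc _ _ _)

/-- Build a morphism of `C₁`. -/
def mkM {x y x' y' : Obj} {h : HHom x y} {h' : HHom x' y'}
    (f : VHom x x') (g : VHom y y') (α : Cell f h h' g) :
    O D h ⟶ O D h' := MHom.mk f g α

/-- Accessors. -/
def Mf {A B : MOb D} (p : A ⟶ B) : VHom A.x B.x := MHom.f p
def Mg {A B : MOb D} (p : A ⟶ B) : VHom A.y B.y := MHom.g p
def Mα {A B : MOb D} (p : A ⟶ B) : Cell (Mf p) A.h B.h (Mg p) := MHom.α p

attribute [reducible] Mf Mg mkM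

theorem Mext {A B : MOb D} {p q : A ⟶ B} (hf : Mf p = Mf q)
    (hg : Mg p = Mg q) (hα : HEq (Mα p) (Mα q)) : p = q :=
  MHom.ext1 hf hg hα

theorem alpha_heq {A B : MOb D} {p q : A ⟶ B} (hpq : p = q) :
    HEq (Mα p) (Mα q) := by cases hpq; rfl

@[simp] theorem mkM_f {x y x' y' : Obj} {h : HHom x y} {h' : HHom x' y'}
    (f : VHom x x') (g : VHom y y') (α : Cell f h h' g) :
    Mf (mkM (D := D) f g α) = f := rfl
@[simp] theorem mkM_g {x y x' y' : Obj} {h : HHom x y} {h' : HHom x' y'}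
    (f : VHom x x') (g : VHom y y') (α : Cell f h h' g) :
    Mg (mkM (D := D) f g α) = g := rfl
@[simp] theorem mkM_alpha {x y x' y' : Obj} {h : HHom x y} {h' : HHom x' y'}
    (f : VHom x x') (g : VHom y y') (α : Cell f h h' g) :
    Mα (mkM (D := D) f g α) = α := rfl

@[simp] theorem comp_f {A B C : MOb D} (p : A ⟶ B) (q : B ⟶ C) :
    Mf (p ≫ q) = D.vcomp (Mf p) (Mf q) := rfl
@[simp] theorem comp_g {A B C : MOb D} (p : A ⟶ B) (q : B ⟶ C) :
    Mg (p ≫ q) = D.vcomp (Mg p) (Mg q) := rfl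
@[simp] theorem comp_alpha {A B C : MOb D} (p : A ⟶ B) (q : B ⟶ C) :
    Mα (p ≫ q) = D.cvcomp (Mα p) (Mα q) := rfl
@[simp] theorem id_f (A : MOb D) : Mf (𝟙 A) = D.vid A.x := rfl
@[simp] theorem id_g (A : MOb D) : Mg (𝟙 A) = D.vid A.y := rfl
@[simp] theorem id_alpha (A : MOb D) : Mα (𝟙 A) = D.cid A.h := rfl

/-- Horizontal identity cells as morphisms. -/
def cM (D : DblCatStr Obj VHom HHom Cell) {x y : Obj} (v : VHom x y) :
    O D (D.hid x) ⟶ O D (D.hid y) := mkM v v (D.chid v)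

attribute [reducible] cM

@[simp] theorem cM_f {x y : Obj} (v : VHom x y) : Mf (cM D v) = v := rfl
@[simp] theorem cM_g {x y : Obj} (v : VHom x y) : Mg (cM D v) = v := rfl

theorem cM_vid (x : Obj) : cM D (D.vid x) = 𝟙 (O D (D.hid x)) :=
  Mext rfl rfl (heq_of_eq (D.chid_vid x))

theorem cM_vcomp {x y z : Obj} (u : VHom x y) (v : VHom y z) :
    cM D (D.vcomp u v) = cM D u ≫ cM D v :=
  Mext rfl rfl (heq_of_eq (D.chid_vcomp u v))

/-- Horizontal composition of morphisms of `C₁` with matching middle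
vertical boundary. -/
def hM {x y z x' y' z' : Obj} {h : HHom x y} {k : HHom y z}
    {h' : HHom x' y'} {k' : HHom y' z'}
    (p : O D h ⟶ O D h') (q : O D k ⟶ O D k') (e : Mg p = Mf q) :
    O D (D.hcomp h k) ⟶ O D (D.hcomp h' k') :=
  mkM (Mf p) (Mg q) (D.chcomp (Mα p) (recast e.symm rfl (Mα q)))

@[simp] theorem hM_f {x y z x' y' z' : Obj} {h : HHom x y} {k : HHom y z}
    {h' : HHom x' y'} {k' : HHom y' z'}
    (p : O D h ⟶ O D h') (q : O D k ⟶ O D k') (e : Mg p = Mf q) :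
    Mf (hM p q e) = Mf p := rfl
@[simp] theorem hM_g {x y z x' y' z' : Obj} {h : HHom x y} {k : HHom y z}
    {h' : HHom x' y'} {k' : HHom y' z'}
    (p : O D h ⟶ O D h') (q : O D k ⟶ O D k') (e : Mg p = Mf q) :
    Mg (hM p q e) = Mg q := rfl

theorem hM_congr {x y z x' y' z' : Obj} {h : HHom x y} {k : HHom y z}
    {h' : HHom x' y'} {k' : HHom y' z'}
    {p p₂ : O D h ⟶ O D h'} {q q₂ : O D k ⟶ O D k'}
    (hp : p = p₂) (hq : q = q₂) (e : Mg p = Mf q)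
    (e₂ : Mg p₂ = Mf q₂) :
    hM p q e = hM p₂ q₂ e₂ := by
  subst hp; subst hq; rfl

theorem hM_comp {x y z x' y' z' x'' y'' z'' : Obj}
    {h : HHom x y} {k : HHom y z} {h' : HHom x' y'} {k' : HHom y' z'}
    {h'' : HHom x'' y''} {k'' : HHom y'' z''}
    (p : O D h ⟶ O D h') (q : O D k ⟶ O D k')
    (p' : O D h' ⟶ O D h'') (q' : O D k' ⟶ O D k'')
    (e : Mg p = Mf q) (e' : Mg p' = Mf q') :
    hM p q e ≫ hM p' q' e'
      = hM (p ≫ p') (q ≫ q') (by simp only [comp_f, comp_g, e, e']) := by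
  obtain ⟨pf, pg, pα⟩ := p
  obtain ⟨qf, qg, qα⟩ := q
  obtain ⟨pf', pg', pα'⟩ := p'
  obtain ⟨qf', qg', qα'⟩ := q'
  have e0 : pg = qf := e
  have e0' : pg' = qf' := e'
  subst e0; subst e0'
  exact Mext rfl rfl (heq_of_eq (D.interchange pα qα pα' qα').symm)

theorem hM_id {x y z : Obj} (h : HHom x y) (k : HHom y z) :
    hM (𝟙 (O D h)) (𝟙 (O D k)) rfl = 𝟙 (O D (D.hcomp h k)) :=
  Mext rfl rfl (heq_of_eq (D.chcomp_cid h k))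

/-- Unitors as morphisms. -/
def lM (D : DblCatStr Obj VHom HHom Cell) {x y : Obj} (h : HHom x y) :
    O D (D.hcomp (D.hid x) h) ⟶ O D h := mkM (D.vid x) (D.vid y) (D.lunit h)
def lMi (D : DblCatStr Obj VHom HHom Cell) {x y : Obj} (h : HHom x y) :
    O D h ⟶ O D (D.hcomp (D.hid x) h) := mkM (D.vid x) (D.vid y) (D.lunitInv h)
def rM (D : DblCatStr Obj VHom HHom Cell) {x y : Obj} (h : HHom x y) :
    O D (D.hcomp h (D.hid y)) ⟶ O D h := mkM (D.vid x) (D.vid y) (D.runit h)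
def rMi (D : DblCatStr Obj VHom HHom Cell) {x y : Obj} (h : HHom x y) :
    O D h ⟶ O D (D.hcomp h (D.hid y)) := mkM (D.vid x) (D.vid y) (D.runitInv h)

@[simp] theorem lM_f {x y : Obj} (h : HHom x y) : Mf (lM D h) = D.vid x := rfl
@[simp] theorem lM_g {x y : Obj} (h : HHom x y) : Mg (lM D h) = D.vid y := rfl
@[simp] theorem lMi_f {x y : Obj} (h : HHom x y) : Mf (lMi D h) = D.vid x := rfl
@[simp] theorem lMi_g {x y : Obj} (h : HHom x y) : Mg (lMi D h) = D.vid y := rfl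
@[simp] theorem rM_f {x y : Obj} (h : HHom x y) : Mf (rM D h) = D.vid x := rfl
@[simp] theorem rM_g {x y : Obj} (h : HHom x y) : Mg (rM D h) = D.vid y := rfl
@[simp] theorem rMi_f {x y : Obj} (h : HHom x y) : Mf (rMi D h) = D.vid x := rfl
@[simp] theorem rMi_g {x y : Obj} (h : HHom x y) : Mg (rMi D h) = D.vid y := rfl

@[simp] theorem lM_lMi {x y : Obj} (h : HHom x y) :
    lM D h ≫ lMi D h = 𝟙 _ :=
  Mext (D.vid_comp _) (D.vid_comp _) (D.lunit_isoL h)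
@[simp] theorem lMi_lM {x y : Obj} (h : HHom x y) :
    lMi D h ≫ lM D h = 𝟙 _ :=
  Mext (D.vid_comp _) (D.vid_comp _) (D.lunit_isoR h)
@[simp] theorem rM_rMi {x y : Obj} (h : HHom x y) :
    rM D h ≫ rMi D h = 𝟙 _ :=
  Mext (D.vid_comp _) (D.vid_comp _) (D.runit_isoL h)
@[simp] theorem rMi_rM {x y : Obj} (h : HHom x y) :
    rMi D h ≫ rM D h = 𝟙 _ :=
  Mext (D.vid_comp _) (D.vid_comp _) (D.runit_isoR h)

theorem lM_nat {x₀ x₁ y₀ y₁ : Obj} {h : HHom x₀ x₁} {k : HHom y₀ y₁}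
    (m : O D h ⟶ O D k) :
    lM D h ≫ m = hM (cM D (Mf m)) m rfl ≫ lM D k :=
  Mext (by simp only [comp_f, lM_f, hM_f, cM_f, D.vid_comp, D.vcomp_vid])
    (by simp only [comp_g, lM_g, hM_g, D.vid_comp, D.vcomp_vid])
    (D.lunit_nat _)

theorem rM_nat {x₀ x₁ y₀ y₁ : Obj} {h : HHom x₀ x₁} {k : HHom y₀ y₁}
    (m : O D h ⟶ O D k) :
    rM D h ≫ m = hM m (cM D (Mg m)) rfl ≫ rM D k :=
  Mext (by simp only [comp_f, rM_f, hM_f, D.vid_comp, D.vcomp_vid])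
    (by simp only [comp_g, rM_g, hM_g, cM_g, D.vid_comp, D.vcomp_vid])
    (D.runit_nat _)

/-- The companion 2-cells as morphisms. -/
def epsM {x y : Obj} {v : VHom x y} (cf : D.CompanionOf v) :
    O D cf.bar ⟶ O D (D.hid y) := mkM v (D.vid y) cf.ε
def etaM {x y : Obj} {v : VHom x y} (cf : D.CompanionOf v) :
    O D (D.hid x) ⟶ O D cf.bar := mkM (D.vid x) v cf.η

attribute [reducible] epsM etaM

@[simp] theorem epsM_f {x y : Obj} {v : VHom x y} (cf : D.CompanionOf v) :
    Mf (epsM cf) = v := rfl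
@[simp] theorem epsM_g {x y : Obj} {v : VHom x y} (cf : D.CompanionOf v) :
    Mg (epsM cf) = D.vid y := rfl
@[simp] theorem etaM_f {x y : Obj} {v : VHom x y} (cf : D.CompanionOf v) :
    Mf (etaM cf) = D.vid x := rfl
@[simp] theorem etaM_g {x y : Obj} {v : VHom x y} (cf : D.CompanionOf v) :
    Mg (etaM cf) = v := rfl

theorem t1M {x y : Obj} {v : VHom x y} (cf : D.CompanionOf v) :
    etaM cf ≫ epsM cf = cM D v :=
  Mext (D.vid_comp _) (D.vcomp_vid _) cf.triangle₁

theorem t2M {x y : Obj} {v : VHom x y} (cf : D.CompanionOf v) :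
    hM (etaM cf) (epsM cf) rfl = lM D cf.bar ≫ rMi D cf.bar :=
  Mext (by simp only [hM_f, etaM_f, comp_f, lM_f, rMi_f, D.vid_comp])
    (by simp only [hM_g, epsM_g, comp_g, lM_g, rMi_g, D.vid_comp])
    (by
      show HEq (D.chcomp cf.η (recast rfl rfl cf.ε)) _
      rw [recast_self, cf.triangle₂]
      exact gcomp_heq _ _)

/-- Key lemma: for a vertical isomorphism `f` with companion, the composite
`ε_f ∙ I_{f⁻¹} ∙ η_f` is the identity 2-cell of the companion. -/
theorem lemT {x y : Obj} (f : D.VIso x y) (cf : D.CompanionOf f.hom) :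
    epsM cf ≫ cM D f.inv ≫ etaM cf = 𝟙 (O D cf.bar) := by
  set T : O D cf.bar ⟶ O D cf.bar := epsM cf ≫ cM D f.inv ≫ etaM cf with hT
  have e₀ : Mg (𝟙 (O D (D.hid x))) = Mf T := by
    rw [hT]
    simp only [id_g, comp_f, epsM_f, cM_f, etaM_f, D.vcomp_vid, f.hom_inv]
  have hTε : T ≫ epsM cf = epsM cf := by
    rw [hT]
    simp only [Category.assoc, t1M]
    rw [← cM_vcomp, f.inv_hom, cM_vid, Category.comp_id]
  have h1 : hM (𝟙 (O D (D.hid x))) T e₀ ≫ hM (etaM cf) (epsM cf) rfl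
      = hM (etaM cf) (epsM cf) rfl := by
    rw [hM_comp]
    exact hM_congr (Category.id_comp _) hTε _ _
  have hP : hM (etaM cf) (epsM cf) rfl ≫ (rM D cf.bar ≫ lMi D cf.bar)
      = 𝟙 _ := by
    rw [t2M]
    simp only [Category.assoc]
    have hmid : rMi D cf.bar ≫ rM D cf.bar ≫ lMi D cf.bar = lMi D cf.bar := by
      rw [← Category.assoc, rMi_rM, Category.id_comp]
    rw [hmid, lM_lMi]
  have h2 : hM (𝟙 (O D (D.hid x))) T e₀ = 𝟙 _ := by
    calc hM (𝟙 (O D (D.hid x))) T e₀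
        = hM (𝟙 (O D (D.hid x))) T e₀
            ≫ (hM (etaM cf) (epsM cf) rfl ≫ (rM D cf.bar ≫ lMi D cf.bar)) := by
          rw [hP, Category.comp_id]
      _ = (hM (𝟙 (O D (D.hid x))) T e₀ ≫ hM (etaM cf) (epsM cf) rfl)
            ≫ (rM D cf.bar ≫ lMi D cf.bar) := by rw [Category.assoc]
      _ = 𝟙 _ := by rw [h1, hP]
  have h4 : cM D (Mf T) = 𝟙 (O D (D.hid x)) := by
    have hft : Mf T = D.vcomp f.hom (D.vcomp f.inv (D.vid x)) := by
      rw [hT]; simp only [comp_f, epsM_f, cM_f, etaM_f]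
    rw [hft, cM_vcomp, cM_vcomp, cM_vid, Category.comp_id, ← cM_vcomp,
      f.hom_inv, cM_vid]
  have h3 : lM D cf.bar ≫ T = lM D cf.bar := by
    rw [lM_nat T, hM_congr h4 rfl (show Mg (cM D (Mf T)) = Mf T from rfl) e₀, h2, Category.id_comp]
  calc T = (lMi D cf.bar ≫ lM D cf.bar) ≫ T := by
        rw [lMi_lM, Category.id_comp]
    _ = lMi D cf.bar ≫ (lM D cf.bar ≫ T) := by rw [Category.assoc]
    _ = 𝟙 _ := by rw [h3, lMi_lM]

/-! ### Construction of the filler and its inverse -/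

section Assembly

variable {x₀ x₁ y₀ y₁ : Obj}

/-- `ε_f ∙ id_k`. -/
def A1 (f : D.VIso x₀ y₀) (k : HHom y₀ y₁) (cf : D.CompanionOf f.hom) :
    O D (D.hcomp cf.bar k) ⟶ O D (D.hcomp (D.hid y₀) k) :=
  hM (epsM cf) (𝟙 (O D k)) rfl

/-- `ε_{g⁻¹}` followed by `I_{g}`. -/
def gam (g' : D.VIso y₁ x₁) (cg : D.CompanionOf g'.hom) :
    O D cg.bar ⟶ O D (D.hid y₁) :=
  epsM cg ≫ cM D g'.inv

def th0 (f : D.VIso x₀ y₀) (g' : D.VIso y₁ x₁) (k : HHom y₀ y₁)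
    (cf : D.CompanionOf f.hom) (cg : D.CompanionOf g'.hom) :
    O D (D.hcomp (D.hcomp cf.bar k) cg.bar)
      ⟶ O D (D.hcomp (D.hcomp (D.hid y₀) k) (D.hid y₁)) :=
  hM (A1 f k cf) (gam g' cg) (show Mg (A1 f k cf) = Mf (gam g' cg) from g'.hom_inv.symm)

/-- The filler 2-cell as a morphism of `C₁`. -/
def thetaMor (f : D.VIso x₀ y₀) (g' : D.VIso y₁ x₁) (k : HHom y₀ y₁)
    (cf : D.CompanionOf f.hom) (cg : D.CompanionOf g'.hom) :
    O D (D.hcomp (D.hcomp cf.bar k) cg.bar) ⟶ O D k :=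
  th0 f g' k cf cg ≫ rM D (D.hcomp (D.hid y₀) k) ≫ lM D k

def zet (f : D.VIso x₀ y₀) (cf : D.CompanionOf f.hom) :
    O D (D.hid y₀) ⟶ O D cf.bar :=
  cM D f.inv ≫ etaM cf

attribute [reducible] zet

def B1 (f : D.VIso x₀ y₀) (k : HHom y₀ y₁) (cf : D.CompanionOf f.hom) :
    O D (D.hcomp (D.hid y₀) k) ⟶ O D (D.hcomp cf.bar k) :=
  hM (zet f cf) (𝟙 (O D k)) f.inv_hom

def B2 (g' : D.VIso y₁ x₁) (k : HHom y₀ y₁)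
    (cf : D.CompanionOf (VIso.hom (D := D) (x := x₀) f)) (cg : D.CompanionOf g'.hom) :
    O D (D.hcomp (D.hcomp cf.bar k) (D.hid y₁))
      ⟶ O D (D.hcomp (D.hcomp cf.bar k) cg.bar) :=
  hM (𝟙 (O D (D.hcomp cf.bar k))) (etaM cg) rfl

/-- The inverse filler 2-cell as a morphism of `C₁`. -/
def thetaMor' (f : D.VIso x₀ y₀) (g' : D.VIso y₁ x₁) (k : HHom y₀ y₁)
    (cf : D.CompanionOf f.hom) (cg : D.CompanionOf g'.hom) :
    O D k ⟶ O D (D.hcomp (D.hcomp cf.bar k) cg.bar) :=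
  lMi D k ≫ B1 f k cf ≫ rMi D (D.hcomp cf.bar k) ≫ B2 (f := f) g' k cf cg

theorem main1 (f : D.VIso x₀ y₀) (g' : D.VIso y₁ x₁) (k : HHom y₀ y₁)
    (cf : D.CompanionOf f.hom) (cg : D.CompanionOf g'.hom) :
    thetaMor' f g' k cf cg ≫ thetaMor f g' k cf cg = 𝟙 (O D k) := by
  have hγ : etaM cg ≫ gam g' cg = 𝟙 (O D (D.hid y₁)) := by
    show etaM cg ≫ epsM cg ≫ cM D g'.inv = _
    rw [← Category.assoc, t1M, ← cM_vcomp, g'.hom_inv, cM_vid]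
  have e₅ : Mg (A1 f k cf) = Mf (𝟙 (O D (D.hid y₁))) := rfl
  have s1 : B2 (f := f) g' k cf cg ≫ th0 f g' k cf cg
      = hM (A1 f k cf) (𝟙 (O D (D.hid y₁))) e₅ := by
    show hM _ _ _ ≫ hM _ _ _ = _
    rw [hM_comp]
    exact hM_congr (Category.id_comp _) hγ _ _
  have s2 : hM (A1 f k cf) (𝟙 (O D (D.hid y₁))) e₅ ≫ rM D (D.hcomp (D.hid y₀) k)
      = rM D (D.hcomp cf.bar k) ≫ A1 f k cf := by
    have hc : cM D (Mg (A1 f k cf)) = 𝟙 (O D (D.hid y₁)) := cM_vid y₁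
    rw [rM_nat (A1 f k cf), hM_congr rfl hc rfl e₅]
  have s3 : B1 f k cf ≫ A1 f k cf = 𝟙 (O D (D.hcomp (D.hid y₀) k)) := by
    show hM _ _ _ ≫ hM _ _ _ = _
    rw [hM_comp]
    have hze : zet f cf ≫ epsM cf = 𝟙 (O D (D.hid y₀)) := by
      show (cM D f.inv ≫ etaM cf) ≫ epsM cf = _
      rw [Category.assoc, t1M, ← cM_vcomp, f.inv_hom, cM_vid]
    rw [hM_congr hze (Category.id_comp (𝟙 (O D k))) _ rfl]
    exact hM_id _ _
  show (lMi D k ≫ B1 f k cf ≫ rMi D (D.hcomp cf.bar k) ≫ B2 (f := f) g' k cf cg)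
      ≫ (th0 f g' k cf cg ≫ rM D (D.hcomp (D.hid y₀) k) ≫ lM D k) = 𝟙 (O D k)
  simp only [Category.assoc]
  rw [reassoc_of% s1, reassoc_of% s2, reassoc_of% (rMi_rM (D := D) (D.hcomp cf.bar k)),
    reassoc_of% s3, lMi_lM]

theorem main2 (f : D.VIso x₀ y₀) (g' : D.VIso y₁ x₁) (k : HHom y₀ y₁)
    (cf : D.CompanionOf f.hom) (cg : D.CompanionOf g'.hom) :
    thetaMor f g' k cf cg ≫ thetaMor' f g' k cf cg
      = 𝟙 (O D (D.hcomp (D.hcomp cf.bar k) cg.bar)) := by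
  have e₆ : Mg (B1 f k cf) = Mf (𝟙 (O D (D.hid y₁))) := rfl
  have e₇ : Mg (B1 f k cf) = Mf (etaM cg) := rfl
  have s6 : rM D (D.hcomp (D.hid y₀) k) ≫ B1 f k cf
      = hM (B1 f k cf) (𝟙 (O D (D.hid y₁))) e₆ ≫ rM D (D.hcomp cf.bar k) := by
    have hc : cM D (Mg (B1 f k cf)) = 𝟙 (O D (D.hid y₁)) := cM_vid y₁
    rw [rM_nat (B1 f k cf), hM_congr rfl hc rfl e₆]
  have s7 : hM (B1 f k cf) (𝟙 (O D (D.hid y₁))) e₆ ≫ B2 (f := f) g' k cf cg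
      = hM (B1 f k cf) (etaM cg) e₇ := by
    show hM _ _ _ ≫ hM _ _ _ = _
    rw [hM_comp]
    exact hM_congr (Category.comp_id _) (Category.id_comp _) _ _
  have s9 : A1 f k cf ≫ B1 f k cf = 𝟙 (O D (D.hcomp cf.bar k)) := by
    show hM _ _ _ ≫ hM _ _ _ = _
    rw [hM_comp]
    have hez : epsM cf ≫ zet f cf = 𝟙 (O D cf.bar) := by
      show epsM cf ≫ cM D f.inv ≫ etaM cf = _
      exact lemT f cf
    rw [hM_congr hez (Category.id_comp (𝟙 (O D k))) _ rfl]
    exact hM_id _ _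
  have s5 : gam g' cg ≫ etaM cg = 𝟙 (O D cg.bar) := by
    show (epsM cg ≫ cM D g'.inv) ≫ etaM cg = _
    rw [Category.assoc]
    exact lemT g' cg
  have s8 : th0 f g' k cf cg ≫ hM (B1 f k cf) (etaM cg) e₇
      = 𝟙 (O D (D.hcomp (D.hcomp cf.bar k) cg.bar)) := by
    show hM _ _ _ ≫ hM _ _ _ = _
    rw [hM_comp]
    rw [hM_congr s9 s5 _ rfl]
    exact hM_id _ _
  show (th0 f g' k cf cg ≫ rM D (D.hcomp (D.hid y₀) k) ≫ lM D k)
      ≫ (lMi D k ≫ B1 f k cf ≫ rMi D (D.hcomp cf.bar k) ≫ B2 (f := f) g' k cf cg)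
      = _
  simp only [Category.assoc]
  rw [reassoc_of% (lM_lMi (D := D) k), reassoc_of% s6,
    reassoc_of% (rM_rMi (D := D) (D.hcomp cf.bar k)), s7, s8]

theorem key (f : D.VIso x₀ y₀) (g' : D.VIso y₁ x₁) (k : HHom y₀ y₁)
    (cf : D.CompanionOf f.hom) (cg : D.CompanionOf g'.hom) :
    ∃ θ : Cell f.hom (D.hcomp (D.hcomp cf.bar k) cg.bar) k g'.inv,
      ∃ β : Cell f.inv k (D.hcomp (D.hcomp cf.bar k) cg.bar) g'.hom,
        HEq (D.cvcomp θ β) (D.cid (D.hcomp (D.hcomp cf.bar k) cg.bar)) ∧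
        HEq (D.cvcomp β θ) (D.cid k) := by
  have pf : Mf (thetaMor f g' k cf cg) = f.hom := by
    simp only [thetaMor, th0, A1, gam, comp_f, hM_f, epsM_f, rM_f, lM_f,
      D.vcomp_vid, D.vid_comp]
  have pg : Mg (thetaMor f g' k cf cg) = g'.inv := by
    simp only [thetaMor, th0, A1, gam, comp_g, hM_g, epsM_g, cM_g, rM_g, lM_g,
      id_g, D.vcomp_vid, D.vid_comp]
  have pf' : Mf (thetaMor' f g' k cf cg) = f.inv := by
    simp only [thetaMor', B1, B2, zet, comp_f, hM_f, cM_f, etaM_f, lMi_f, rMi_f, id_f,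
      D.vcomp_vid, D.vid_comp]
  have pg' : Mg (thetaMor' f g' k cf cg) = g'.hom := by
    simp only [thetaMor', B1, B2, zet, comp_g, hM_g, etaM_g, lMi_g, rMi_g, id_g,
      D.vcomp_vid, D.vid_comp]
  have hθ : mkM (D := D) f.hom g'.inv (recast pf pg (Mα (thetaMor f g' k cf cg)))
      = thetaMor f g' k cf cg :=
    Mext (by rw [mkM_f, pf]) (by rw [mkM_g, pg])
      (by rw [mkM_alpha]; exact recast_heq _ _ _)
  have hθ' : mkM (D := D) f.inv g'.hom (recast pf' pg' (Mα (thetaMor' f g' k cf cg)))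
      = thetaMor' f g' k cf cg :=
    Mext (by rw [mkM_f, pf']) (by rw [mkM_g, pg'])
      (by rw [mkM_alpha]; exact recast_heq _ _ _)
  refine ⟨recast pf pg (Mα (thetaMor f g' k cf cg)),
    recast pf' pg' (Mα (thetaMor' f g' k cf cg)), ?_, ?_⟩
  · have h2 := main2 f g' k cf cg
    rw [← hθ, ← hθ'] at h2
    exact alpha_heq h2
  · have h1 := main1 f g' k cf cg
    rw [← hθ, ← hθ'] at h1
    exact alpha_heq h1

end Assembly

end FibrantProof

/-- a weak double category in which every vertical isomorphism
has an orthogonal companion is fibrant; moreover, for a boundary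
`(f, k, g)` the horizontal 1-cell `ḡ⁻¹ ∘ (k ∘ f̄)` carries an invertible
filler. -/
theorem fibrant_of_companions (D : DblCatStr Obj VHom HHom Cell)
    (c : ∀ {x y : Obj} (f : D.VIso x y), D.CompanionOf f.hom) :
    D.Fibrant ∧
      ∀ {x₀ x₁ y₀ y₁ : Obj} (f : D.VIso x₀ y₀) (g : D.VIso x₁ y₁) (k : HHom y₀ y₁),
        ∃ θ : Cell f.hom (D.hcomp (D.hcomp (c f).bar k) (c g.symm).bar) k g.hom,
          D.CellInv f g θ := by
  have key' : ∀ {x₀ x₁ y₀ y₁ : Obj} (f : D.VIso x₀ y₀) (g : D.VIso x₁ y₁)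
      (k : HHom y₀ y₁),
      ∃ θ : Cell f.hom (D.hcomp (D.hcomp (c f).bar k) (c g.symm).bar) k g.hom,
        D.CellInv f g θ := by
    intro x₀ x₁ y₀ y₁ f g k
    obtain ⟨θ, β, h1, h2⟩ := FibrantProof.key f g.symm k (c f) (c g.symm)
    exact ⟨θ, β, h1, h2⟩
  refine ⟨?_, key'⟩
  intro x₀ x₁ y₀ y₁ f g k
  obtain ⟨θ, hinv⟩ := key' f g k
  exact ⟨_, θ, hinv⟩
end
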